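/- arXiv:1403.4673 — 2 statements merged into one kernel-verified Lean document; each statement's English description precedes it below -/
import Mathlib

section
/- Let H be a Hopf algebra over k acting inner faithfully on a left H-module M, and let H' ⊆ H be a Hopf subalgebra. Then M is inner faithful as an H'-module. Consequently, any Hopf subalgebra of a Galois-theoretical Hopf algebra is Galois-theoretical. -/
open TensorProduct

/-- A grouplike element of a Hopf algebra. -/
def IsGrouplike (k : Type) {H : Type} [CommSemiring k] [Semiring H] [HopfAlgebra k H]
    (g : H) : Prop :=
  g ≠ 0 ∧ Coalgebra.comul (R := k) g = g ⊗ₜ[k] g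

/-- A Hopf ideal of a Hopf algebra `H` over `k`: a two-sided ideal which is also a coideal
and is stable under the antipode. -/
structure HopfIdeal (k H : Type) [CommSemiring k] [Semiring H] [HopfAlgebra k H] where
  carrier : Submodule k H
  mul_mem_left : ∀ (a : H) {x : H}, x ∈ carrier → a * x ∈ carrier
  mul_mem_right : ∀ (a : H) {x : H}, x ∈ carrier → x * a ∈ carrier
  comul_mem : ∀ x ∈ carrier, Coalgebra.comul (R := k) x ∈
      (LinearMap.range (TensorProduct.map carrier.subtype (LinearMap.id (M := H))) ⊔
       LinearMap.range (TensorProduct.map (LinearMap.id (M := H)) carrier.subtype))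
  counit_eq_zero : ∀ x ∈ carrier, Coalgebra.counit (R := k) x = 0
  antipode_mem : ∀ x ∈ carrier, HopfAlgebra.antipode (R := k) x ∈ carrier

/-- A (left) action of a Hopf algebra `H` on an algebra `A`, making `A` an `H`-module algebra:
`h ⬝ (a b) = ∑ (h₁ ⬝ a) (h₂ ⬝ b)` and `h ⬝ 1 = ε(h) 1`. -/
structure HopfAction (k H A : Type) [CommSemiring k] [Semiring H] [HopfAlgebra k H]
    [Semiring A] [Algebra k A] where
  act : H →ₐ[k] Module.End k A
  act_mul : ∀ (h : H) (a b : A),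
    act h (a * b) = LinearMap.mul' k A
      (TensorProduct.map ((act.toLinearMap : H →ₗ[k] A →ₗ[k] A).flip a)
        ((act.toLinearMap : H →ₗ[k] A →ₗ[k] A).flip b) (Coalgebra.comul (R := k) h))
  act_one : ∀ h : H, act h (1 : A) = Coalgebra.counit (R := k) h • (1 : A)

/-- A module over a Hopf algebra (given by its structure map `ρ`) is inner faithful if no
nonzero Hopf ideal annihilates it. -/
def InnerFaithful (k : Type) {H M : Type} [CommSemiring k] [Semiring H] [HopfAlgebra k H]
    [AddCommMonoid M] [Module k M] (ρ : H →ₗ[k] Module.End k M) : Prop :=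
  ∀ I : HopfIdeal k H, (∀ x ∈ I.carrier, ρ x = 0) → I.carrier = ⊥

/-- A witness that the Hopf algebra `H` is Galois-theoretical: a field `L ⊇ k` together with an
inner faithful `H`-module algebra structure on `L`. -/
structure GTWitness (k H : Type) [Field k] [Semiring H] [HopfAlgebra k H] : Type 1 where
  L : Type
  [fieldL : Field L]
  [algL : Algebra k L]
  action : HopfAction k H L
  faithful : InnerFaithful k action.act.toLinearMap

/-- A Hopf algebra is Galois-theoretical if it acts inner faithfully and `k`-linearly on a field
containing `k`. -/
def GaloisTheoretical (k H : Type) [Field k] [Semiring H] [HopfAlgebra k H] : Prop :=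
  Nonempty (GTWitness k H)

/-- The set of invariants of a Hopf algebra action. -/
def HopfAction.invariants {k H A : Type} [CommSemiring k] [Semiring H] [HopfAlgebra k H]
    [Semiring A] [Algebra k A] (ha : HopfAction k H A) : Set A :=
  {a : A | ∀ h : H, ha.act h a = Coalgebra.counit (R := k) h • a}

/-- A subcoalgebra: a subspace `V` with `Δ(V) ⊆ V ⊗ V`. -/
def IsSubcoalgebra (k : Type) {H : Type} [CommSemiring k] [Semiring H] [HopfAlgebra k H]
    (V : Submodule k H) : Prop :=
  ∀ x ∈ V, Coalgebra.comul (R := k) x ∈ LinearMap.range (TensorProduct.map V.subtype V.subtype)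

/-- A simple subcoalgebra: a nonzero subcoalgebra with no nonzero proper subcoalgebras. -/
def IsSimpleSubcoalgebra (k : Type) {H : Type} [CommSemiring k] [Semiring H] [HopfAlgebra k H]
    (V : Submodule k H) : Prop :=
  IsSubcoalgebra k V ∧ V ≠ ⊥ ∧
    ∀ W : Submodule k H, IsSubcoalgebra k W → W ≤ V → W = ⊥ ∨ W = V

/-- The coradical of a Hopf algebra: the sum of all its simple subcoalgebras. -/
def coradical (k H : Type) [CommSemiring k] [Semiring H] [HopfAlgebra k H] : Submodule k H :=
  sSup {V : Submodule k H | IsSimpleSubcoalgebra k V}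

/-- A Hopf algebra is pointed iff its coradical is spanned by the grouplike elements. -/
def IsPointedHopf (k H : Type) [CommSemiring k] [Semiring H] [HopfAlgebra k H] : Prop :=
  coradical k H = Submodule.span k {g : H | IsGrouplike k g}

/-!
If a Hopf ideal `I` of `H'` acts by zero through `f`, then the two-sided ideal of `H` generated by
`f(I)` also acts by zero, and it is again a Hopf ideal: `f` preserves comultiplication and counit,
and it also intertwines the antipodes since `S ∘ f` and `f ∘ S` are both convolution inverses
of `f`. Inner faithfulness over `H` makes this ideal zero, so `f(I) = 0` and `I = 0` by
injectivity. Restricting a module-algebra structure along `f` keeps the module-algebra axioms,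
which gives the statement about Galois-theoretical Hopf algebras.
-/

open WithConv HopfAlgebra Coalgebra

section
variable {k H H' : Type} [CommRing k] [Ring H] [Ring H'] [HopfAlgebra k H] [HopfAlgebra k H']

lemma BialgHom.map_antipode (f : H' →ₐc[k] H) (x : H') :
    f (antipode k x) = antipode k (f x) := by
  suffices h : antipode k ∘ₗ f.toLinearMap = f.toLinearMap ∘ₗ antipode k from
    (LinearMap.congr_fun h x).symm
  apply toConv_injective
  refine left_inv_eq_right_inv (a := toConv f.toLinearMap) ?_ ?_
  · calc toConv (antipode k ∘ₗ f.toLinearMap) * toConv f.toLinearMap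
        = toConv ((toConv (antipode k) * toConv .id : WithConv (H →ₗ[k] H)).ofConv ∘ₗ
            f.toCoalgHom.toLinearMap) := by
          rw [LinearMap.convMul_comp_coalgHom_distrib]; rfl
      _ = 1 := by rw [LinearMap.antipode_mul_id, LinearMap.convOne_comp_coalgHom f.toCoalgHom]
  · calc toConv f.toLinearMap * toConv (f.toLinearMap ∘ₗ antipode k)
        = toConv ((AlgHomClass.toAlgHom f).toLinearMap ∘ₗ
            (toConv .id * toConv (antipode k) : WithConv (H' →ₗ[k] H')).ofConv) := by
          rw [LinearMap.algHom_comp_convMul_distrib]; rfl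
      _ = 1 := by rw [LinearMap.id_mul_antipode, LinearMap.algHom_comp_convOne]

namespace HopfIdeal

lemma map_comul_eq_zero {V W : Type} [AddCommMonoid V] [Module k V] [AddCommMonoid W] [Module k W]
    (I : HopfIdeal k H') {g : H' →ₗ[k] V} {g' : H' →ₗ[k] W}
    (hg : ∀ x ∈ I.carrier, g x = 0) (hg' : ∀ x ∈ I.carrier, g' x = 0) {x : H'}
    (hx : x ∈ I.carrier) : TensorProduct.map g g' (comul x) = 0 := by
  obtain ⟨_, ⟨u, rfl⟩, _, ⟨v, rfl⟩, hx⟩ := Submodule.mem_sup.1 (I.comul_mem x hx)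
  have hgI : g ∘ₗ I.carrier.subtype = 0 := LinearMap.ext fun y => hg y y.2
  have hg'I : g' ∘ₗ I.carrier.subtype = 0 := LinearMap.ext fun y => hg' y y.2
  rw [← hx, map_add, ← LinearMap.comp_apply, ← LinearMap.comp_apply, ← map_comp, ← map_comp,
    hgI, hg'I, map_zero_left, map_zero_right, LinearMap.zero_apply, LinearMap.zero_apply, add_zero]

def ofIsHopfIdeal (J : Ideal H) [J.IsTwoSided] (hJ : J.IsHopfIdeal k) : HopfIdeal k H where
  carrier := J.restrictScalars k
  mul_mem_left a _ hx := J.mul_mem_left a hx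
  mul_mem_right a _ hx := J.mul_mem_right a hx
  comul_mem x hx := by
    rw [sup_comm]
    exact ((Submodule.isCoideal_iff_comul_mem _).1 hJ.toIsCoideal).2 x hx
  counit_eq_zero x hx := hJ.counit_eq_zero hx
  antipode_mem x hx := hJ.antipode_mem hx

def spanImage (f : H' →ₐc[k] H) (I : HopfIdeal k H') : TwoSidedIdeal H :=
  TwoSidedIdeal.span (f '' I.carrier)

variable {f : H' →ₐc[k] H} {I : HopfIdeal k H'}

lemma apply_mem_spanImage {x : H'} (hx : x ∈ I.carrier) : f x ∈ spanImage f I :=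
  TwoSidedIdeal.subset_span ⟨x, hx, rfl⟩

lemma spanImage_le {K : TwoSidedIdeal H} (h : ∀ x ∈ I.carrier, f x ∈ K) : spanImage f I ≤ K :=
  TwoSidedIdeal.span_le.2 <| by rintro _ ⟨x, hx, rfl⟩; exact h x hx

variable (f I) in
theorem isHopfIdeal_spanImage : (spanImage f I).asIdeal.IsHopfIdeal k := by
  set J := spanImage f I
  -- Each condition places `J` inside a two-sided ideal (a kernel, or a preimage under the
  -- anti-multiplicative antipode), so it only has to be checked on the generators `f x`.
  refine { toIsCoideal := ⟨fun z hz => ?_, fun z hz => ?_⟩, antipode_mem := fun z hz => ?_ }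
  · have hε : J ≤ TwoSidedIdeal.ker (Bialgebra.counitAlgHom k H) := spanImage_le fun x hx => by
      simp [TwoSidedIdeal.mem_ker, I.counit_eq_zero x hx]
    exact (TwoSidedIdeal.mem_ker (Bialgebra.counitAlgHom k H)).1 (hε hz)
  · have hπ : ∀ x ∈ I.carrier, Ideal.Quotient.mkₐ k J.asIdeal (f x) = 0 := fun x hx =>
      Ideal.Quotient.eq_zero_iff_mem.2 (TwoSidedIdeal.mem_asIdeal.2 (apply_mem_spanImage hx))
    have hΔ : J ≤ TwoSidedIdeal.ker ((Algebra.TensorProduct.map (Ideal.Quotient.mkₐ k J.asIdeal)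
        (Ideal.Quotient.mkₐ k J.asIdeal)).comp (Bialgebra.comulAlgHom k H)) :=
      spanImage_le fun x hx => by
        rw [TwoSidedIdeal.mem_ker, AlgHom.comp_apply, Bialgebra.comulAlgHom_apply,
          ← CoalgHomClass.map_comp_comul_apply f x, ← LinearMap.comp_apply]
        change (TensorProduct.map _ _ ∘ₗ TensorProduct.map _ _) _ = 0
        rw [← map_comp]
        exact I.map_comul_eq_zero hπ hπ hx
    exact (TwoSidedIdeal.mem_ker _).1 (hΔ hz)
  · have hS : J ≤ TwoSidedIdeal.comap (antipodeAlgHomOp k H) J.op := spanImage_le fun x hx => by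
      simpa [TwoSidedIdeal.mem_comap, ← BialgHom.map_antipode] using
        apply_mem_spanImage (f := f) (I.antipode_mem x hx)
    simpa using (TwoSidedIdeal.mem_comap _).1 (hS hz)

variable (f I) in
def map : HopfIdeal k H :=
  ofIsHopfIdeal _ (isHopfIdeal_spanImage f I)

end HopfIdeal

theorem InnerFaithful.comp_bialgHom {M : Type} [AddCommMonoid M] [Module k M]
    {ρ : H →ₐ[k] Module.End k M} (hρ : InnerFaithful k ρ.toLinearMap) {f : H' →ₐc[k] H}
    (hf : Function.Injective f) : InnerFaithful k (ρ.comp (f : H' →ₐ[k] H)).toLinearMap := by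
  intro I hI
  have hmap : (I.map f).carrier = ⊥ := hρ _ fun z hz => (TwoSidedIdeal.mem_ker ρ).1 <|
    HopfIdeal.spanImage_le (fun x hx => (TwoSidedIdeal.mem_ker ρ).2 (hI x hx)) hz
  refine eq_bot_iff.2 fun x hx => (Submodule.mem_bot k).2 (hf ?_)
  rw [map_zero, ← Submodule.mem_bot k, ← hmap]
  exact HopfIdeal.apply_mem_spanImage hx

end

section
variable {k H H' A : Type} [CommSemiring k] [Semiring H] [Semiring H'] [HopfAlgebra k H]
  [HopfAlgebra k H'] [Semiring A] [Algebra k A]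

def HopfAction.comp (a : HopfAction k H A) (f : H' →ₐc[k] H) : HopfAction k H' A where
  act := a.act.comp (f : H' →ₐ[k] H)
  act_mul h x y := by
    change a.act (f h) (x * y) = _
    rw [a.act_mul, ← CoalgHomClass.map_comp_comul_apply f h,
      ← LinearMap.comp_apply (TensorProduct.map _ _), ← map_comp]
    rfl
  act_one h := by
    change a.act (f h) 1 = _
    rw [a.act_one, CoalgHomClass.counit_comp_apply]

end

theorem GaloisTheoretical.of_injective_bialgHom {k H H' : Type} [Field k] [Ring H] [Ring H']
    [HopfAlgebra k H] [HopfAlgebra k H'] {f : H' →ₐc[k] H} (hf : Function.Injective f)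
    (h : GaloisTheoretical k H) : GaloisTheoretical k H' := by
  obtain ⟨⟨L, action, faithful⟩⟩ := h
  exact ⟨⟨L, action.comp f, faithful.comp_bialgHom hf⟩⟩

theorem innerFaithful_restrict_hopfSubalgebra_general
    (k : Type) [Field k]
    (H H' : Type) [Ring H] [HopfAlgebra k H] [Ring H'] [HopfAlgebra k H']
    (f : H' →ₐc[k] H) (hf : Function.Injective f) :
    (∀ (M : Type) [AddCommGroup M] [Module k M] (ρ : H →ₐ[k] Module.End k M),
        InnerFaithful k ρ.toLinearMap →
          InnerFaithful k (ρ.comp (f : H' →ₐ[k] H)).toLinearMap) ∧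
    (GaloisTheoretical k H → GaloisTheoretical k H') :=
  ⟨fun _ _ _ _ hρ => hρ.comp_bialgHom hf, GaloisTheoretical.of_injective_bialgHom hf⟩

/-- The restriction of an inner faithful action of a Hopf algebra `H` to a Hopf
subalgebra `H'` (formalized as an injective bialgebra homomorphism `f : H' →ₐc[k] H`; a bialgebra
map between Hopf algebras is automatically a Hopf algebra map) is inner faithful.  Consequently,
any Hopf subalgebra of a Galois-theoretical Hopf algebra is Galois-theoretical. -/
theorem innerFaithful_restrict_hopfSubalgebra
    (k : Type) [Field k] [IsAlgClosed k] [CharZero k]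
    (H H' : Type) [Ring H] [HopfAlgebra k H] [Ring H'] [HopfAlgebra k H']
    (f : H' →ₐc[k] H) (hf : Function.Injective f) :
    (∀ (M : Type) [AddCommGroup M] [Module k M] (ρ : H →ₐ[k] Module.End k M),
        InnerFaithful k ρ.toLinearMap →
          InnerFaithful k (ρ.comp (f : H' →ₐ[k] H)).toLinearMap) ∧
    (GaloisTheoretical k H → GaloisTheoretical k H') :=
  innerFaithful_restrict_hopfSubalgebra_general k H H' f hf
end

section
/- Let F be a field of characteristic zero containing a primitive n-th root of unity, and let v ∈ F^×. Then the polynomial tⁿ − v is irreducible in F[t] if and only if v is not an n'-th power in F for any divisor n' > 1 of n. -/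
/-!
If `Xⁿ - v` is reducible, let `g` be an irreducible factor of degree `0 < d < n` and `c` the norm
of a root of `g`; then `cⁿ = v^d`. With `e = gcd(n, d)`, `n = n'e` and `d = d'e`, the elements
`c^{n'}` and `v^{d'}` have the same `e`-th power, so they differ by an `e`-th root of unity, which
is an `n'`-th power of `ζ`. Hence `v^{d'}` is an `n'`-th power, and so is `v` since `d'` and `n'`
are coprime; moreover `n' > 1` because `d < n`.
-/

open Polynomial

theorem IsPrimitiveRoot.exists_pow_eq_of_pow_mul_eq_pow {R : Type*} [CommRing R] [IsDomain R]
    {ζ : R} {k e : ℕ} (hζ : IsPrimitiveRoot ζ (k * e)) (hke : 0 < k * e) {w u : R}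
    (h : w ^ (k * e) = u ^ e) : ∃ f, f ^ k = u := by
  have hu : u ∈ nthRoots e (u ^ e) := (mem_nthRoots (Nat.pos_of_mul_pos_left hke)).mpr rfl
  rw [(hζ.pow hke rfl).nthRoots_eq (α := w ^ k) (by rw [← pow_mul, h])] at hu
  obtain ⟨i, -, rfl⟩ := Multiset.mem_map.mp hu
  exact ⟨ζ ^ i * w, by ring⟩

theorem exists_pow_eq_of_pow_eq_pow_of_lt {K : Type*} [Field K] {n d : ℕ} {ζ : K}
    (hζ : IsPrimitiveRoot ζ n) (hd : 0 < d) (hdn : d < n) {c v : K} (h : c ^ n = v ^ d) :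
    ∃ m, 1 < m ∧ m ∣ n ∧ ∃ f, f ^ m = v := by
  obtain ⟨e, n', d', he, hcop, rfl, rfl⟩ := Nat.exists_coprime' (Nat.gcd_pos_of_pos_right n hd)
  have hn' : 1 < n' := by
    have := Nat.lt_of_mul_lt_mul_right hdn
    have := Nat.pos_of_mul_pos_right hd
    omega
  obtain ⟨f, hf⟩ : ∃ f, f ^ n' = v ^ d' :=
    hζ.exists_pow_eq_of_pow_mul_eq_pow (by positivity) (w := c) (by rw [h, pow_mul])
  exact ⟨n', hn', dvd_mul_right n' e, (pow_mem_range_pow_of_coprime hcop.symm v).mp ⟨f, hf⟩⟩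

theorem norm_root_pow_eq_of_dvd_X_pow_sub_C {K : Type*} [Field K] {n : ℕ} {a : K} {g : K[X]}
    (hg : Irreducible g) (hdvd : g ∣ X ^ n - C a) :
    Algebra.norm K (AdjoinRoot.root g) ^ n = a ^ g.natDegree := by
  have hroot := eval₂_eq_zero_of_dvd_of_eval₂_eq_zero _ _ hdvd (AdjoinRoot.eval₂_root g)
  rw [eval₂_sub, eval₂_pow, eval₂_C, eval₂_X, sub_eq_zero] at hroot
  rw [← map_pow, hroot, ← AdjoinRoot.algebraMap_eq, Algebra.norm_algebraMap,
    (AdjoinRoot.powerBasis hg.ne_zero).finrank, AdjoinRoot.powerBasis_dim hg.ne_zero]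

theorem Polynomial.exists_irreducible_dvd_natDegree_lt_of_not_irreducible {K : Type*} [Field K]
    {p : K[X]} (hp : 0 < p.natDegree) (hirr : ¬Irreducible p) :
    ∃ g, Irreducible g ∧ g ∣ p ∧ g.natDegree < p.natDegree := by
  obtain ⟨g, hg, hdvd⟩ := exists_irreducible_of_natDegree_pos hp
  have hp0 : p ≠ 0 := ne_zero_of_natDegree_gt hp
  refine ⟨g, hg, hdvd, (natDegree_le_of_dvd hdvd hp0).lt_of_ne fun heq ↦ hirr ?_⟩
  exact (associated_of_dvd_of_natDegree_le hdvd hp0 heq.ge).irreducible hg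

theorem X_pow_sub_C_irreducible_iff_not_pow_general
    (F : Type) [Field F]
    (n : ℕ) (hn : 0 < n) (ζ : F) (hζ : IsPrimitiveRoot ζ n)
    (v : F) :
    Irreducible (Polynomial.X ^ n - Polynomial.C v) ↔
      ∀ n' : ℕ, 1 < n' → n' ∣ n → ¬∃ f : F, f ^ n' = v := by
  refine ⟨fun hirr m hm1 hmn ⟨f, hf⟩ ↦ pow_ne_of_irreducible_X_pow_sub_C hirr hmn hm1.ne' f hf,
    fun H ↦ by_contra fun hred ↦ ?_⟩
  obtain ⟨g, hg, hdvd, hlt⟩ := exists_irreducible_dvd_natDegree_lt_of_not_irreducible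
    (by rwa [natDegree_X_pow_sub_C]) hred
  rw [natDegree_X_pow_sub_C] at hlt
  obtain ⟨m, hm1, hmn, hpow⟩ := exists_pow_eq_of_pow_eq_pow_of_lt hζ hg.natDegree_pos hlt
    (norm_root_pow_eq_of_dvd_X_pow_sub_C hg hdvd)
  exact H m hm1 hmn hpow

/-- **Statement 15.** Let `F` be a field of characteristic zero containing a primitive `n`-th
root of unity, and let `v ∈ F^×`.  Then `Xⁿ - v` is irreducible in `F[X]` iff `v` is not an
`n'`-th power in `F` for any divisor `n' > 1` of `n`. -/
theorem X_pow_sub_C_irreducible_iff_not_pow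
    (F : Type) [Field F] [CharZero F]
    (n : ℕ) (hn : 0 < n) (ζ : F) (hζ : IsPrimitiveRoot ζ n)
    (v : F) (hv : v ≠ 0) :
    Irreducible (Polynomial.X ^ n - Polynomial.C v) ↔
      ∀ n' : ℕ, 1 < n' → n' ∣ n → ¬∃ f : F, f ^ n' = v :=
  X_pow_sub_C_irreducible_iff_not_pow_general F n hn ζ hζ v
end
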